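/- arXiv:1006.5053 — 6 statements merged into one kernel-verified Lean document; each statement's English description precedes it below -/
import Mathlib

section
/- Let H be a finite set of cardinality 2n, α a fixed-point-free involution of H, and σ a permutation of H such that γ = ασ is a single 2n-cycle. Then the number of cycles of σ plus twice the genus g equals n+1, where the genus g is defined by Euler's formula v = n + 1 - 2g with v the number of cycles of σ; equivalently, the quantity n + 1 - (number of cycles of σ) is a nonnegative even integer. -/
open Equiv

/-- The number of cycles of a permutation (counting fixed points as cycles of
length one): the number of nontrivial cycles plus the number of fixed points. -/
noncomputable def cycleCount {H : Type*} [Fintype H] [DecidableEq H]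
    (σ : Equiv.Perm H) : ℕ :=
  σ.cycleType.card + Fintype.card {x // σ x = x}

/-!
Multiplying a permutation by a transposition `(a b)` either splits the cycle through `a` and `b`
or merges the two cycles through them, so it lowers the number of cycles by at most one. A
fixed-point-free involution `α` of a set of size `2n` is a product of `n` transpositions, hence
`σ = α⁻¹ (ασ)` has at most `1 + n` cycles. For parity, a permutation of a set of size `N` with `c`
cycles has sign `(-1)^(N + c)`; comparing signs in `σ = α (ασ)` shows that `n + 1 - c` is even.
-/

namespace Setoid

variable {α : Type*}

def mergeClasses (r : Setoid α) (a b : α) : Setoid α where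
  r c d := r c d ∨ (r c a ∧ r b d) ∨ (r c b ∧ r a d)
  iseqv := by
    have hsymm : ∀ {x y}, r x y → r y x := r.symm
    have htrans : ∀ {x y z}, r x y → r y z → r x z := r.trans
    exact ⟨fun c => .inl (r.refl c), fun h => by grind, fun h g => by grind⟩

theorem le_mergeClasses (r : Setoid α) (a b : α) : r ≤ r.mergeClasses a b :=
  fun _ _ h => .inl h

theorem card_quotient_le_card_quotient_mergeClasses_add_one [Finite α] (r : Setoid α) (a b : α) :
    Nat.card (Quotient r) ≤ Nat.card (Quotient (r.mergeClasses a b)) + 1 := by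
  let f : Quotient r → Quotient (r.mergeClasses a b) := Quotient.map' id (r.le_mergeClasses a b)
  have hinj : Set.InjOn f {⟦a⟧}ᶜ := by
    intro u hu v hv huv
    induction u using Quotient.ind with | _ c => ?_
    induction v using Quotient.ind with | _ d => ?_
    rcases Quotient.exact huv with h | ⟨hca, -⟩ | ⟨-, had⟩
    · exact Quotient.sound h
    · exact absurd (Quotient.sound hca) hu
    · exact absurd (Quotient.sound (r.symm had)) hv
  have hcompl := Set.ncard_compl_add_ncard {(⟦a⟧ : Quotient r)}
  have hle := Set.ncard_le_ncard_of_injOn f (fun _ _ => Set.mem_univ _) hinj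
  rw [Set.ncard_singleton] at hcompl
  rw [Set.ncard_univ] at hle
  omega

theorem card_quotient_le_of_le [Finite α] {r s : Setoid α} (h : r ≤ s) :
    Nat.card (Quotient s) ≤ Nat.card (Quotient r) :=
  Nat.card_le_card_of_surjective (Quotient.map' id h)
    (.of_comp (g := Quotient.mk r) Quotient.mk_surjective)

end Setoid

namespace Equiv.Perm

variable {α : Type*}

theorem sameCycle_setoid_le {f : Perm α} {s : Setoid α} (h : ∀ x, s x (f x)) :
    SameCycle.setoid f ≤ s := by
  rintro x _ ⟨i, rfl⟩
  induction i using Int.induction_on with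
  | zero => exact s.refl x
  | succ i ih => rw [add_comm, zpow_add, zpow_one, mul_apply]; exact s.trans ih (h _)
  | pred i ih =>
    rw [sub_eq_neg_add, zpow_add, zpow_neg_one, mul_apply]
    refine s.trans ih (s.symm ?_)
    convert h (f⁻¹ ((f ^ (-(i : ℤ))) x)) using 1
    exact (f.apply_symm_apply _).symm

variable [DecidableEq α]

theorem sameCycle_setoid_swap_mul_le (w : Perm α) (a b : α) :
    SameCycle.setoid (swap a b * w) ≤ (SameCycle.setoid w).mergeClasses a b := by
  refine sameCycle_setoid_le fun c => ?_
  have hc : w.SameCycle c (w c) := sameCycle_apply_right.2 (SameCycle.refl w c)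
  rw [mul_apply]
  by_cases ha : w c = a
  · rw [ha, swap_apply_left]
    exact .inr (.inl ⟨ha ▸ hc, SameCycle.refl w b⟩)
  by_cases hb : w c = b
  · rw [hb, swap_apply_right]
    exact .inr (.inr ⟨hb ▸ hc, SameCycle.refl w a⟩)
  rw [swap_apply_of_ne_of_ne ha hb]
  exact .inl hc

variable [Fintype α]

/-- Fixed points are their own classes, since `cycleFactorsFinset` only records nontrivial
cycles. -/
def cycleClass (σ : Perm α) (x : α) : σ.cycleFactorsFinset ⊕ {x // σ x = x} :=
  if h : σ x = x then .inr ⟨x, h⟩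
  else .inl ⟨σ.cycleOf x, cycleOf_mem_cycleFactorsFinset_iff.mpr (mem_support.mpr h)⟩

theorem cycleClass_eq_iff {σ : Perm α} {x y : α} :
    σ.cycleClass x = σ.cycleClass y ↔ σ.SameCycle x y := by
  unfold cycleClass
  by_cases hx : σ x = x <;> by_cases hy : σ y = y <;> simp only [hx, hy, dite_true, dite_false,
    reduceCtorEq, false_iff, Sum.inl.injEq, Sum.inr.injEq, Subtype.mk.injEq]
  · exact ⟨fun h => h ▸ SameCycle.refl σ x, fun h => h.eq_of_left hx⟩
  · exact fun h => hy (h.apply_eq_self_iff.mp hx)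
  · exact fun h => hx (h.apply_eq_self_iff.mpr hy)
  · exact (sameCycle_iff_cycleOf_eq_of_mem_support (mem_support.mpr hx) (mem_support.mpr hy)).symm

theorem cycleClass_surjective (σ : Perm α) : Function.Surjective σ.cycleClass := by
  rintro (⟨c, hc⟩ | ⟨x, hx⟩)
  · obtain ⟨x, hx⟩ := (mem_cycleFactorsFinset_iff.mp hc).1.nonempty_support
    have hσx : σ x ≠ x := mem_support.mp (mem_cycleFactorsFinset_support_le hc hx)
    refine ⟨x, ?_⟩
    simp only [cycleClass, hσx, dite_false, Sum.inl.injEq, Subtype.mk.injEq]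
    exact (cycle_is_cycleOf hx hc).symm
  · exact ⟨x, by simp [cycleClass, hx]⟩

theorem cycleCount_eq_card_quotient (σ : Perm α) :
    cycleCount σ = Nat.card (Quotient (SameCycle.setoid σ)) := by
  have hker : SameCycle.setoid σ = Setoid.ker σ.cycleClass :=
    Setoid.ext fun _ _ => cycleClass_eq_iff.symm
  rw [hker, Nat.card_congr (Setoid.quotientKerEquivOfSurjective _ σ.cycleClass_surjective),
    Nat.card_sum, Nat.card_eq_fintype_card, Nat.card_eq_fintype_card, Fintype.card_coe,
    cycleCount, cycleType_def, Multiset.card_map]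
  rfl

theorem cycleCount_le_cycleCount_swap_mul_add_one (w : Perm α) (a b : α) :
    cycleCount w ≤ cycleCount (swap a b * w) + 1 := by
  rw [cycleCount_eq_card_quotient, cycleCount_eq_card_quotient]
  calc Nat.card (Quotient (SameCycle.setoid w))
      ≤ Nat.card (Quotient ((SameCycle.setoid w).mergeClasses a b)) + 1 :=
        Setoid.card_quotient_le_card_quotient_mergeClasses_add_one _ a b
    _ ≤ Nat.card (Quotient (SameCycle.setoid (swap a b * w))) + 1 :=
        Nat.add_le_add_right (Setoid.card_quotient_le_of_le (sameCycle_setoid_swap_mul_le w a b)) 1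

theorem cycleCount_le_cycleCount_list_prod_mul (σ : Perm α) {l : List (Perm α)}
    (hl : ∀ τ ∈ l, τ.IsSwap) : cycleCount σ ≤ cycleCount (l.prod * σ) + l.length := by
  induction l with
  | nil => simp
  | cons τ l ih =>
    obtain ⟨a, b, -, rfl⟩ := hl τ List.mem_cons_self
    have hswap := cycleCount_le_cycleCount_swap_mul_add_one (l.prod * σ) a b
    have hrest := ih fun τ hτ => hl τ (List.mem_cons_of_mem _ hτ)
    rw [List.prod_cons, mul_assoc, List.length_cons]
    omega

theorem exists_list_isSwap_prod_eq_of_mul_self_eq_one {σ : Perm α} (hσ : σ * σ = 1) :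
    ∃ l : List (Perm α), (∀ τ ∈ l, τ.IsSwap) ∧ l.prod = σ ∧ 2 * l.length = σ.support.card := by
  have horder : orderOf σ ∣ 2 := orderOf_dvd_of_pow_eq_one (by rw [pow_two, hσ])
  have hcycleType : ∀ m ∈ σ.cycleType, m = 2 := fun m hm =>
    le_antisymm (Nat.le_of_dvd two_pos ((dvd_of_mem_cycleType hm).trans horder))
      (two_le_of_mem_cycleType hm)
  have hfactors := (cycleFactorsFinset_eq_list_toFinset σ.cycleFactorsFinset.nodup_toList).mp
    σ.cycleFactorsFinset.toList_toFinset.symm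
  refine ⟨σ.cycleFactorsFinset.toList, fun τ hτ => ?_, hfactors.2.2, ?_⟩
  · rw [Finset.mem_toList] at hτ
    exact card_support_eq_two.mp
      (hcycleType _ (cycleType_def σ ▸ Multiset.mem_map_of_mem _ hτ))
  · rw [Finset.length_toList, ← sum_cycleType, Multiset.eq_replicate_card.mpr hcycleType,
      Multiset.sum_replicate, cycleType_def, Multiset.card_map, smul_eq_mul, mul_comm]
    rfl

theorem card_fixed_add_card_support (σ : Perm α) :
    Fintype.card {x // σ x = x} + σ.support.card = Fintype.card α := by
  rw [Fintype.card_subtype]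
  exact Finset.card_filter_add_card_filter_not _

theorem sign_eq_neg_one_pow_card_add_cycleCount (σ : Perm α) :
    sign σ = (-1) ^ (Fintype.card α + cycleCount σ) := by
  rw [sign_of_cycleType, ← σ.card_fixed_add_card_support, ← sum_cycleType, cycleCount,
    show ∀ a b c : ℕ, a + b + (c + a) = b + c + 2 * a by intros; ring,
    pow_add _ _ (2 * _), pow_mul, Int.units_sq, one_pow, mul_one]

theorem IsCycle.cycleCount_eq_one {γ : Perm α} (hγ : γ.IsCycle) (hsupp : γ.support = Finset.univ) :
    cycleCount γ = 1 := by
  have hfix : IsEmpty {x // γ x = x} :=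
    ⟨fun ⟨x, hx⟩ => mem_support.mp (hsupp ▸ Finset.mem_univ x) hx⟩
  rw [cycleCount, card_cycleType_eq_one.mpr hγ, Fintype.card_eq_zero]

end Equiv.Perm

/-- for a unicellular map `(H, α, σ)` of size `n` (so `|H| = 2n`,
`α` a fixed-point-free involution, and `γ = ασ` a single `2n`-cycle), the
quantity `n + 1 - (number of cycles of σ)` is a nonnegative even integer, i.e.
there is a genus `g` with `(number of cycles of σ) + 2g = n + 1`. -/
theorem unicellular_genus_exists {H : Type*} [Fintype H] [DecidableEq H]
    (n : ℕ) (hcard : Fintype.card H = 2 * n)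
    (α σ : Equiv.Perm H)
    (hinv : α * α = 1) (hfp : ∀ h : H, α h ≠ h)
    (hface : (α * σ).IsCycle ∧ (α * σ).support = Finset.univ) :
    ∃ g : ℕ, cycleCount σ + 2 * g = n + 1 := by
  obtain ⟨l, hl_swap, hl_prod, hl_length⟩ := Perm.exists_list_isSwap_prod_eq_of_mul_self_eq_one hinv
  have hα_support : α.support = Finset.univ :=
    Finset.eq_univ_of_forall fun h => Perm.mem_support.mpr (hfp h)
  rw [hα_support, Finset.card_univ, hcard] at hl_length
  have hface_count : cycleCount (α * σ) = 1 := hface.1.cycleCount_eq_one hface.2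
  have hbound : cycleCount σ ≤ n + 1 := by
    have h := Perm.cycleCount_le_cycleCount_list_prod_mul σ hl_swap
    rw [hl_prod, hface_count] at h
    omega
  have hsign : Perm.sign σ = Perm.sign α * Perm.sign (α * σ) := by
    rw [← map_mul, ← mul_assoc, hinv, one_mul]
  rw [Perm.sign_eq_neg_one_pow_card_add_cycleCount σ,
    Perm.sign_eq_neg_one_pow_card_add_cycleCount (α * σ), hface_count, hcard, ← hl_prod,
    Perm.sign_prod_list_swap hl_swap, ← pow_add] at hsign
  have heven : Even (2 * n + cycleCount σ + (l.length + (2 * n + 1))) := by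
    rw [← neg_one_pow_eq_one_iff_even (R := ℤˣ) (by decide), pow_add, hsign, Int.units_mul_self]
  obtain ⟨k, hk⟩ := heven
  exact ⟨(n + 1 - cycleCount σ) / 2, by omega⟩
end

section
/- Let (H, α, σ) be a unicellular map with face permutation γ = ασ, root r, and linear order <_m on H defined by r < γ(r) < γ²(r) < ... < γ^{2n-1}(r). Call h ∈ H a down-step if σ(h) ≤_m h. Then the number of down-steps equals n + 1, where 2n = |H|. -/
/-!
Transport everything to `Fin (2n)` along the order: `α` becomes a fixed-point-free involution
`β`, and since `σ = α γ`, the half-edge in position `k` is a down-step iff `β (k + 1) ≤ k`.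
Shifting indices by one, these are the positions `j` with `β j ≤ j - 1`, i.e. `j = 0` (where
`j - 1` wraps around to the maximum) together with the `j` such that `β j < j`. The latter are
exactly half of all positions, because `β` swaps them with the positions where `j < β j`.
-/

open Finset Function

theorem Function.Involutive.two_mul_card_filter_lt {α : Type*} [Fintype α] [LinearOrder α]
    {f : α → α} (hf : Involutive f) (hne : ∀ x, f x ≠ x) :
    2 * #{x | f x < x} = Fintype.card α := by
  have hswap : #{x | f x < x} = #{x | ¬ f x < x} :=
    card_equiv hf.toPerm fun x => by
      simp only [mem_filter, mem_univ, true_and, Involutive.coe_toPerm, hf x, not_lt]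
      exact (hne x).le_iff_lt.symm
  have htotal := card_filter_add_card_filter_not (s := univ) (fun x => f x < x)
  rw [card_univ] at htotal
  omega

namespace Fin

variable {m : ℕ} [NeZero m]

theorem le_sub_one_iff_lt {i j : Fin m} (hj : j ≠ 0) : i ≤ j - 1 ↔ i < j := by
  rw [le_def, lt_def, val_sub_one_of_ne_zero hj]
  have := (pos_iff_ne_zero' j).mpr hj
  omega

theorem le_neg_one (i : Fin m) : i ≤ -1 := by
  obtain ⟨m, rfl⟩ := Nat.exists_eq_succ_of_ne_zero (NeZero.ne m)
  rw [le_def, coe_neg_one]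
  exact Nat.lt_succ_iff.mp i.isLt

theorem card_filter_apply_add_one_le (f : Fin m → Fin m) :
    #{k | f (k + 1) ≤ k} = #{k | f k < k} + 1 := by
  have hshift : #{k | f (k + 1) ≤ k} = #{j | f j ≤ j - 1} :=
    card_equiv (Equiv.addRight 1) fun k => by simp
  have hinsert :
      univ.filter (fun j => f j ≤ j - 1) = insert 0 (univ.filter fun j => f j < j) := by
    ext j
    rcases eq_or_ne j 0 with rfl | hj
    · simp [le_neg_one]
    · simp [hj, le_sub_one_iff_lt hj]
  rw [hshift, hinsert, card_insert_of_notMem (by simp)]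

end Fin

theorem downsteps_count {H : Type*} [Fintype H]
    (n : ℕ) (hn : 1 ≤ n)
    (α σ : Equiv.Perm H)
    (hinv : α * α = 1) (hfp : ∀ h : H, α h ≠ h)
    (ord : Fin (2 * n) ≃ H)
    (hordsucc : ∀ k : Fin (2 * n), (α * σ) (ord k) = ord (k + ⟨1, by omega⟩)) :
    (Finset.univ.filter (fun h : H => ord.symm (σ h) ≤ ord.symm h)).card
      = n + 1 := by
  have : NeZero (2 * n) := ⟨by omega⟩
  have hαα : ∀ h, α (α h) = h := fun h => by
    simpa only [Equiv.Perm.mul_apply, Equiv.Perm.one_apply] using DFunLike.congr_fun hinv h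
  set β : Fin (2 * n) → Fin (2 * n) := fun k => ord.symm (α (ord k))
  have hβ : Involutive β := fun k => by simp [β, hαα]
  have hβne : ∀ k, β k ≠ k := fun k h => hfp (ord k) (ord.symm_apply_eq.mp h)
  have hone : (⟨1, by omega⟩ : Fin (2 * n)) = 1 :=
    Fin.ext (by rw [Fin.val_one', Nat.mod_eq_of_lt (by omega)])
  have hσ : ∀ k, ord.symm (σ (ord k)) = β (k + 1) := fun k => by
    rw [← hαα (σ (ord k)), ← Equiv.Perm.mul_apply α σ, hordsucc, hone]
  calc #{h | ord.symm (σ h) ≤ ord.symm h}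
      = #{k | β (k + 1) ≤ k} := (card_equiv ord fun k => by simp [hσ]).symm
    _ = #{k | β k < k} + 1 := Fin.card_filter_apply_add_one_le β
    _ = n + 1 := by
      have := hβ.two_mul_card_filter_lt hβne
      rw [Fintype.card_fin] at this
      omega
end

section
/- Let (H, α, σ) be a unicellular map of genus g with n edges, with the order <_m induced by the root and face γ = ασ. A down-step h (i.e. σ(h) ≤_m h) is a trisection if σ(h) is not the minimal element, for <_m, of the cycle of σ containing h. Then the number of trisections of the map equals exactly 2g. -/
/-!
A down-step `h` that is not a trisection is exactly one for which `σ h` is the `<ₘ`-minimum of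
its vertex, and `σ` maps these bijectively onto the vertex minima; so the trisections number
`#down-steps - v`. Since `σ = α γ`, a non-final `h` is a down-step iff `α (γ h) <ₘ γ h`, i.e. iff
`γ h` is the larger half-edge of its edge, while the final half-edge is always a down-step; hence
there are `n + 1` down-steps and `n + 1 - v = 2 g` trisections.
-/

open Equiv

open Finset Function

namespace Equiv.Perm

variable {H β : Type*} [LinearOrder β]

def IsCycleMin (σ : Perm H) (f : H → β) (m : H) : Prop :=
  ∀ x, σ.SameCycle m x → f m ≤ f x

variable {σ : Perm H} {f : H → β}

theorem isCycleMin_of_apply_eq_self {m : H} (hm : σ m = m) : σ.IsCycleMin f m := by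
  rintro x ⟨i, rfl⟩
  rw [zpow_apply_eq_self_of_apply_eq_self hm i]

theorem IsCycleMin.eq_of_sameCycle (hf : Injective f) {a b : H} (ha : σ.IsCycleMin f a)
    (hb : σ.IsCycleMin f b) (hab : σ.SameCycle a b) : a = b :=
  hf (le_antisymm (ha b hab) (hb a hab.symm))

variable [Fintype H] [DecidableEq H]

instance (σ : Perm H) (f : H → β) : DecidablePred (σ.IsCycleMin f) :=
  fun _ => by unfold IsCycleMin; infer_instance

theorem exists_isCycleMin_cycleOf_eq {c : Perm H} (hc : c ∈ σ.cycleFactorsFinset) :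
    ∃ m, σ.IsCycleMin f m ∧ σ m ≠ m ∧ σ.cycleOf m = c := by
  obtain ⟨hcycle, hcσ⟩ := mem_cycleFactorsFinset_iff.1 hc
  obtain ⟨m, hm, hmin⟩ := exists_min_image c.support f hcycle.nonempty_support
  have hσm : σ m ≠ m := by rw [← hcσ m hm]; exact mem_support.1 hm
  have hmc : σ.cycleOf m = c := (cycle_is_cycleOf hm hc).symm
  refine ⟨m, fun x hx => hmin x ?_, hσm, hmc⟩
  rw [← hmc, mem_support_cycleOf_iff]
  exact ⟨hx, mem_support.2 hσm⟩

theorem card_filter_isCycleMin_of_apply_ne (hf : Injective f) :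
    #{m | σ.IsCycleMin f m ∧ σ m ≠ m} = #σ.cycleFactorsFinset := by
  refine card_nbij (σ.cycleOf ·) (fun m hm => ?_) (fun a ha b hb hab => ?_) (fun c hc => ?_)
  · exact cycleOf_mem_cycleFactorsFinset_iff.2 (mem_support.2 (mem_filter.1 hm).2.2)
  · simp only [coe_filter, mem_univ, true_and] at ha hb
    exact ha.1.eq_of_sameCycle hf hb.1 <|
      (sameCycle_iff_cycleOf_eq_of_mem_support (mem_support.2 ha.2) (mem_support.2 hb.2)).2 hab
  · obtain ⟨m, hmin, hσm, hmc⟩ := exists_isCycleMin_cycleOf_eq (f := f) hc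
    exact ⟨m, by simp [hmin, hσm], hmc⟩

theorem card_filter_isCycleMin (hf : Injective f) :
    #{m | σ.IsCycleMin f m} = cycleCount σ := by
  have hfix : #{m | σ.IsCycleMin f m ∧ σ m = m} = Fintype.card {x // σ x = x} := by
    rw [Fintype.card_subtype]
    exact congrArg card (filter_congr fun m _ => and_iff_right_of_imp isCycleMin_of_apply_eq_self)
  have hsplit := card_filter_add_card_filter_not (s := {m | σ.IsCycleMin f m}) fun m => σ m = m
  rw [filter_filter, filter_filter, hfix, card_filter_isCycleMin_of_apply_ne hf] at hsplit
  rw [cycleCount, cycleType, Multiset.card_map, card_val, ← hsplit, add_comm]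

theorem card_filter_le_add_cycleCount (σ : Perm H) (hf : Injective f) :
    #{h | f (σ h) ≤ f h ∧ ∃ x, σ.SameCycle h x ∧ f x < f (σ h)} + cycleCount σ =
      #{h | f (σ h) ≤ f h} := by
  rw [← card_filter_isCycleMin hf, ← card_filter_add_card_filter_not (s := {h | f (σ h) ≤ f h})
    fun h => ∃ x, σ.SameCycle h x ∧ f x < f (σ h), filter_filter, filter_filter]
  congr 1
  refine (card_equiv σ fun h => ?_).symm
  simp only [mem_filter, mem_univ, true_and]
  simp only [IsCycleMin, sameCycle_apply_left, not_exists, not_and, not_lt]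
  exact ⟨fun h' => h'.2, fun h' => ⟨h' h (SameCycle.refl _ _), h'⟩⟩

end Equiv.Perm

theorem Function.Involutive.two_mul_card_filter_apply_lt {H β : Type*} [Fintype H] [LinearOrder β]
    {α : H → H} (hα : Involutive α) (hfix : ∀ h, α h ≠ h) {f : H → β} (hf : Injective f) :
    2 * #{h | f (α h) < f h} = Fintype.card H := by
  have hswap : #{h | f (α h) < f h} = #{h | f h < f (α h)} :=
    card_equiv (hα.toPerm α) fun h => by simp [hα h]
  have hcompl : #{h | ¬ f (α h) < f h} = #{h | f h < f (α h)} :=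
    congrArg card <| filter_congr fun h _ => by
      rw [not_lt, le_iff_lt_or_eq, or_iff_left (hf.ne (hfix h)).symm]
  have := card_filter_add_card_filter_not (s := univ) fun h => f (α h) < f h
  rw [hcompl, card_univ] at this
  omega

theorem Fin.le_iff_add_one_eq_zero_or_lt_add_one {N : ℕ} [NeZero N] (x k : Fin N) :
    x ≤ k ↔ k + 1 = 0 ∨ x < k + 1 := by
  obtain ⟨N, rfl⟩ := Nat.exists_eq_add_one_of_ne_zero (NeZero.ne N)
  by_cases hk : k = Fin.last N
  · simp [hk, Fin.le_last]
  · have hlt : k < Fin.last N := Fin.lt_last_iff_ne_last.2 hk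
    rw [Fin.le_def, Fin.lt_def, Fin.ext_iff, Fin.val_add_one_of_lt hlt, Fin.val_zero]
    omega

theorem Fin.card_filter_apply_add_one_le_s2 {N : ℕ} [NeZero N] (a : Fin N → Fin N) :
    #{k | a (k + 1) ≤ k} = #{j | a j < j} + 1 := by
  calc #{k | a (k + 1) ≤ k} = #{j | j = 0 ∨ a j < j} :=
        card_equiv (Equiv.addRight 1) fun k => by
          simp [Fin.le_iff_add_one_eq_zero_or_lt_add_one (a (k + 1)) k]
    _ = #(insert 0 ({j | a j < j} : Finset _)) := by
        rw [filter_or, filter_eq', if_pos (mem_univ _)]; rfl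
    _ = #{j | a j < j} + 1 := card_insert_of_notMem (by simp)

theorem card_filter_symm_apply_le_of_apply_eq_add_one {H : Type*} [Fintype H] {N : ℕ} [NeZero N]
    (e : Fin N ≃ H) {γ : H → H} (hγ : ∀ k, γ (e k) = e (k + 1)) (τ : H → H) :
    #{h | e.symm (τ (γ h)) ≤ e.symm h} = #{h | e.symm (τ h) < e.symm h} + 1 := by
  calc #{h | e.symm (τ (γ h)) ≤ e.symm h}
      = #{k | e.symm (τ (e (k + 1))) ≤ k} := card_equiv e.symm fun h => by
        simp only [mem_filter, mem_univ, true_and, ← hγ, Equiv.apply_symm_apply]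
    _ = #{j | e.symm (τ (e j)) < j} + 1 :=
        Fin.card_filter_apply_add_one_le_s2 fun j => e.symm (τ (e j))
    _ = #{h | e.symm (τ h) < e.symm h} + 1 := by
        congr 1
        exact card_equiv e fun k => by simp

/-- the trisection lemma: in a rooted unicellular map
`(H, α, σ)` of genus `g` with `n` edges (order `<ₘ` encoded by
`ord : Fin (2n) ≃ H` as usual), a down-step `h` (i.e. `σ(h) ≤ₘ h`) is a
trisection if `σ(h)` is not the `<ₘ`-minimal element of the cycle of `σ`
containing `h` (equivalently, some element of that cycle is `<ₘ`-smaller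
than `σ(h)`).  The number of trisections equals `2g`. -/
theorem trisections_count {H : Type*} [Fintype H] [DecidableEq H]
    (n g : ℕ) (hn : 1 ≤ n) (hcard : Fintype.card H = 2 * n)
    (α σ : Equiv.Perm H)
    (hinv : α * α = 1) (hfp : ∀ h : H, α h ≠ h)
    (hgenus : cycleCount σ + 2 * g = n + 1)
    (ord : Fin (2 * n) ≃ H)
    (hordsucc : ∀ k : Fin (2 * n), (α * σ) (ord k) = ord (k + ⟨1, by omega⟩)) :
    (Finset.univ.filter (fun h : H =>
        ord.symm (σ h) ≤ ord.symm h ∧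
        ∃ x : H, σ.SameCycle h x ∧ ord.symm x < ord.symm (σ h))).card
      = 2 * g := by
  have : NeZero (2 * n) := ⟨by omega⟩
  have hα : Involutive α := fun h => congrArg (· h) hinv
  have hone : (⟨1, by omega⟩ : Fin (2 * n)) = 1 := Fin.ext (Nat.mod_eq_of_lt (by omega)).symm
  have hγ : ∀ k, (α * σ) (ord k) = ord (k + 1) := by simpa only [hone] using hordsucc
  have hσ : ∀ h, σ h = α ((α * σ) h) := fun h => (hα (σ h)).symm
  have hdown : #{h | ord.symm (σ h) ≤ ord.symm h} = n + 1 := by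
    have := hα.two_mul_card_filter_apply_lt hfp ord.symm.injective
    simp only [hσ]
    rw [card_filter_symm_apply_le_of_apply_eq_add_one ord hγ]
    omega
  have := σ.card_filter_le_add_cycleCount ord.symm.injective
  omega
end

section
/- With the notation of the gluing operation: if the face of m is γ = (a₁, k¹₁,...,k^{l₁}₁, a₂, k¹₂,...,k^{l₂}₂, a₃, k¹₃,...,k^{l₃}₃), then the face of the glued map m̄ is γ̄ = (a₁, k¹₂,...,k^{l₂}₂, a₃, k¹₁,...,k^{l₁}₁, a₂, k¹₃,...,k^{l₃}₃). In particular, γ̄(h) = γ(h) for all h ∉ {a₁,a₂,a₃}, and γ̄(a_i) = γ(a_{i+1}) for i = 1,2,3 with indices mod 3. -/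
open Equiv

/-- with the notation of the gluing operation (three half-edges
`a₁, a₂, a₃` lying in three distinct cycles of `σ`, and `σ̄` the permutation
obtained by merging these three cycles, i.e. `σ̄ = σ * (swap a₁ a₂ * swap a₂ a₃)`),
the face `γ̄ = ασ̄` of the glued map satisfies: `γ̄(h) = γ(h)` for every
`h ∉ {a₁, a₂, a₃}`, and `γ̄(a₁) = γ(a₂)`, `γ̄(a₂) = γ(a₃)`, `γ̄(a₃) = γ(a₁)`. -/
theorem face_of_glued_map {H : Type*} [Fintype H] [DecidableEq H]
    (n : ℕ) (hcard : Fintype.card H = 2 * n)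
    (α σ : Equiv.Perm H)
    (hinv : α * α = 1) (hfp : ∀ h : H, α h ≠ h)
    (hface : (α * σ).IsCycle ∧ (α * σ).support = Finset.univ)
    (a₁ a₂ a₃ : H)
    (hc12 : ¬ σ.SameCycle a₁ a₂) (hc13 : ¬ σ.SameCycle a₁ a₃)
    (hc23 : ¬ σ.SameCycle a₂ a₃)
    (σ' : Equiv.Perm H)
    (hσ' : σ' = σ * (Equiv.swap a₁ a₂ * Equiv.swap a₂ a₃)) :
    (∀ h : H, h ≠ a₁ → h ≠ a₂ → h ≠ a₃ → (α * σ') h = (α * σ) h) ∧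
      (α * σ') a₁ = (α * σ) a₂ ∧
      (α * σ') a₂ = (α * σ) a₃ ∧
      (α * σ') a₃ = (α * σ) a₁ := by
  have h12 : a₁ ≠ a₂ := fun h => hc12 (h ▸ Equiv.Perm.SameCycle.refl σ a₁)
  have h13 : a₁ ≠ a₃ := fun h => hc13 (h ▸ Equiv.Perm.SameCycle.refl σ a₁)
  have h23 : a₂ ≠ a₃ := fun h => hc23 (h ▸ Equiv.Perm.SameCycle.refl σ a₂)
  subst hσ'
  refine ⟨fun h h1 h2 h3 => ?_, ?_, ?_, ?_⟩ <;>
    simp [Equiv.Perm.mul_apply, Equiv.swap_apply_of_ne_of_ne, Equiv.swap_apply_def,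
      h12, h13, h23, h12.symm, h13.symm, h23.symm, *]
end

section
/- Let (H, α, σ̄) be a unicellular map of genus g+1 and let a₁, a₂, a₃ be three half-edges belonging to a single cycle v̄ of σ̄ which are intertwined, i.e. they do not appear in the same cyclic order in the cycle of γ̄ = ασ̄ as in the cycle v̄. Writing v̄ = (a₁, h¹₂,...,h^{m₂}₂, a₂, h¹₃,...,h^{m₃}₃, a₃, h¹₁,...,h^{m₁}₁) and replacing v̄ in σ̄ by the product of three cycles (a₁,h¹₁,...,h^{m₁}₁)(a₂,h¹₂,...,h^{m₂}₂)(a₃,h¹₃,...,h^{m₃}₃) yields a permutation σ such that ασ is a single cycle; the resulting unicellular map has genus g. -/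
open Equiv

/-- `hitTime f x y` is the least positive `k` with `f^k x = y` (the position
of `y` in the `f`-orbit starting just after `x`); `0` if there is none. -/
noncomputable def hitTime {H : Type*} (f : Equiv.Perm H) (x y : H) : ℕ :=
  sInf {k : ℕ | 0 < k ∧ (f ^ k) x = y}

/-!
Multiplying a permutation on the right by a transposition `(x y)` cuts the cycle through `x` and
`y` into two when they share a cycle, and glues their two cycles together otherwise.

On the vertex side, `σ = σ̄ (a₂ a₃) (a₁ a₂)`: the first factor cuts `v̄` at `a₂, a₃`, and since
`a₂` comes before `a₃` when `v̄` is read from `a₁`, the piece through `a₁` still contains `a₂`, so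
the second factor cuts again: `σ` has two more cycles than `σ̄`. On the face side,
`ασ = γ̄ (a₂ a₃) (a₁ a₂)`: the first factor cuts the single face in two, and intertwining means
that `a₃` comes before `a₂` when `γ̄` is read from `a₁`, so `a₁` lies on the piece of `a₃`, away
from `a₂`; the second factor glues the two pieces back into a single face. The genus formula then
drops by one.
-/

theorem Setoid.card_quotient_eq_add_one_of_split {α : Type*} [Finite α] {r s : Setoid α}
    (hrs : r ≤ s) {x y : α} (hs : s x y) (hr : ¬ r x y) (hsplit : ∀ z, s x z → r x z ∨ r y z)
    (hrest : ∀ z w, ¬ s x z → s z w → r z w) :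
    Nat.card (Quotient r) = Nat.card (Quotient s) + 1 := by
  let φ : Quotient r → Quotient s := Quotient.map id hrs
  have hx : Quotient.mk r x ≠ Quotient.mk r y := fun h => hr (Quotient.exact h)
  have hinj : Set.InjOn φ {Quotient.mk r y}ᶜ := by
    have hclass : ∀ z, s x z → Quotient.mk r z ≠ Quotient.mk r y →
        Quotient.mk r z = Quotient.mk r x := fun z hz hzy =>
      (Quotient.sound ((hsplit z hz).resolve_right fun h => hzy (Quotient.sound h).symm)).symm
    rintro ⟨z⟩ hz ⟨w⟩ hw hzw
    have hzw : s z w := Quotient.exact hzw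
    by_cases hxz : s x z
    · exact (hclass z hxz hz).trans (hclass w (s.trans hxz hzw) hw).symm
    · exact Quotient.sound (hrest z w hxz hzw)
  have himage : φ '' {Quotient.mk r y}ᶜ = Set.univ := by
    refine Set.eq_univ_of_forall fun q => Quotient.inductionOn q fun z => ?_
    by_cases hzy : Quotient.mk r z = Quotient.mk r y
    · exact ⟨Quotient.mk r x, hx, Quotient.sound (s.trans hs (hrs (Quotient.exact hzy.symm)))⟩
    · exact ⟨Quotient.mk r z, hzy, rfl⟩
  calc Nat.card (Quotient r)
      = (Set.univ \ {Quotient.mk r y}).ncard + 1 := by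
        rw [Set.ncard_sdiff_singleton_add_one (Set.mem_univ _), Set.ncard_univ]
    _ = Nat.card (Quotient s) + 1 := by
        rw [← Set.compl_eq_univ_sdiff, ← hinj.ncard_image, himage, Set.ncard_univ]

section hitTime

open Perm

variable {α : Type*} {f : Perm α} {x y : α} {j : ℕ}

theorem hitTime_pos_and_pow_apply [Finite α] (h : f.SameCycle x y) :
    0 < hitTime f x y ∧ (f ^ hitTime f x y) x = y := by
  obtain ⟨i, hi, -, hix⟩ := h.exists_pow_eq''
  exact Nat.sInf_mem (s := {k | 0 < k ∧ (f ^ k) x = y}) ⟨i, hi, hix⟩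

theorem hitTime_le (hj : 0 < j) (h : (f ^ j) x = y) : hitTime f x y ≤ j :=
  Nat.sInf_le ⟨hj, h⟩

theorem pow_apply_ne_of_lt_hitTime (hxy : x ≠ y) (hj : j < hitTime f x y) : (f ^ j) x ≠ y := by
  intro h
  rcases j.eq_zero_or_pos with rfl | hj0
  · exact hxy h
  · exact (hitTime_le hj0 h).not_gt hj

theorem pow_apply_ne_self_of_lt_hitTime [Finite α] (h : f.SameCycle x y) (hj0 : 0 < j)
    (hj : j < hitTime f x y) : (f ^ j) x ≠ x := by
  intro hfix
  have hy : (f ^ (hitTime f x y - j)) ((f ^ j) x) = y := by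
    rw [← mul_apply, ← pow_add, Nat.sub_add_cancel hj.le]
    exact (hitTime_pos_and_pow_apply h).2
  rw [hfix] at hy
  exact (hitTime_le (by omega) hy).not_gt (by omega)

end hitTime

namespace Equiv.Perm

theorem SameCycle.mem_of_mapsTo {α : Type*} [Finite α] {f : Perm α} {x y : α} {s : Set α}
    (hs : Set.MapsTo f s s) (hx : x ∈ s) (h : f.SameCycle x y) : y ∈ s := by
  obtain ⟨i, rfl⟩ := h.exists_nat_pow_eq
  rw [coe_pow]
  exact hs.iterate i hx

section swap

variable {α : Type*} [DecidableEq α] {f : Perm α} {x y z w : α}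

theorem mul_swap_pow_apply_of_forall_ne {m : ℕ}
    (h : ∀ j < m, (f ^ j) z ≠ x ∧ (f ^ j) z ≠ y) :
    ((f * swap x y) ^ m) z = (f ^ m) z := by
  induction m with
  | zero => rfl
  | succ m ih =>
    obtain ⟨hx, hy⟩ := h m m.lt_succ_self
    rw [pow_succ', mul_apply, ih fun j hj => h j (hj.trans m.lt_succ_self), mul_apply,
      swap_apply_of_ne_of_ne hx hy, ← mul_apply, ← pow_succ']

theorem SameCycle.sameCycle_swap_apply (hxy : f.SameCycle x y) (z : α) :
    f.SameCycle z (swap x y z) := by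
  rcases eq_or_ne z x with rfl | hzx
  · simpa using hxy
  rcases eq_or_ne z y with rfl | hzy
  · simpa using hxy.symm
  · rw [swap_apply_of_ne_of_ne hzx hzy]

theorem SameCycle.of_mul_swap [Finite α] (hxy : f.SameCycle x y)
    (h : (f * swap x y).SameCycle z w) : f.SameCycle z w :=
  h.mem_of_mapsTo (f := f * swap x y) (s := {u | f.SameCycle z u})
    (fun _ hu => hu.trans (sameCycle_apply_right.2 (hxy.sameCycle_swap_apply _)))
    (SameCycle.refl f z)

theorem SameCycle.mul_swap_of_not_sameCycle [Finite α] (hxy : f.SameCycle x y)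
    (hxz : ¬ f.SameCycle x z) (h : f.SameCycle z w) : (f * swap x y).SameCycle z w := by
  refine (h.mem_of_mapsTo (s := {u | f.SameCycle z u ∧ (f * swap x y).SameCycle z u})
    (fun u ⟨hfu, hgu⟩ => ?_) ⟨SameCycle.refl f z, SameCycle.refl _ z⟩).2
  have hux : u ≠ x := by rintro rfl; exact hxz hfu.symm
  have huy : u ≠ y := by rintro rfl; exact hxz (hxy.trans hfu.symm)
  have hgu' : (f * swap x y) u = f u := by rw [mul_apply, swap_apply_of_ne_of_ne hux huy]
  exact ⟨sameCycle_apply_right.2 hfu, hgu' ▸ sameCycle_apply_right.2 hgu⟩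

theorem SameCycle.mul_swap_or [Finite α] (h : f.SameCycle x z) :
    (f * swap x y).SameCycle x z ∨ (f * swap x y).SameCycle y z := by
  set g := f * swap x y
  refine h.mem_of_mapsTo (s := {u | g.SameCycle x u ∨ g.SameCycle y u})
    (fun u hu => ?_) (Or.inl (SameCycle.refl g x))
  have hfu : f u = g (swap x y u) := by simp [g]
  rcases eq_or_ne u x with rfl | hux
  · exact Or.inr (by simpa [hfu] using sameCycle_apply_right.2 (SameCycle.refl g y))
  rcases eq_or_ne u y with rfl | huy
  · exact Or.inl (by simpa [hfu] using sameCycle_apply_right.2 (SameCycle.refl g x))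
  rw [Set.mem_ofPred_eq, hfu, swap_apply_of_ne_of_ne hux huy, sameCycle_apply_right,
    sameCycle_apply_right]
  exact hu

theorem not_sameCycle_mul_swap [Finite α] (hxy : x ≠ y) (h : f.SameCycle x y) :
    ¬ (f * swap x y).SameCycle x y := by
  obtain ⟨hk, hky⟩ := hitTime_pos_and_pow_apply h
  set k := hitTime f x y
  -- `T = {f x, f² x, …, f^k x = y}` is the orbit of `y` under `f * swap x y`, and it misses `x`.
  set T := {u | ∃ j, 0 < j ∧ j ≤ k ∧ (f ^ j) x = u}
  have hT : Set.MapsTo (f * swap x y) T T := by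
    rintro _ ⟨j, hj0, hjk, rfl⟩
    rcases hjk.eq_or_lt with rfl | hjk
    · exact ⟨1, one_pos, hk, by rw [hky, mul_apply, swap_apply_right, pow_one]⟩
    · refine ⟨j + 1, j.succ_pos, hjk, ?_⟩
      rw [mul_apply, swap_apply_of_ne_of_ne (pow_apply_ne_self_of_lt_hitTime h hj0 hjk)
        (pow_apply_ne_of_lt_hitTime hxy hjk), pow_succ', mul_apply]
  intro hg
  obtain ⟨j, hj0, hjk, hjx⟩ := hg.symm.mem_of_mapsTo hT ⟨k, hk, le_rfl, hky⟩
  rcases hjk.eq_or_lt with rfl | hjk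
  · exact hxy (hjx.symm.trans hky)
  · exact pow_apply_ne_self_of_lt_hitTime h hj0 hjk hjx

theorem sameCycle_mul_swap_of_not_sameCycle [Finite α] (h : ¬ f.SameCycle x y) :
    (f * swap x y).SameCycle x y := by
  obtain ⟨hp, hpy⟩ := hitTime_pos_and_pow_apply (SameCycle.refl f y)
  set p := hitTime f y y
  -- `f * swap x y` sends `x` to `f y` and then follows `f` around the cycle of `y`.
  have hpath : ((f * swap x y) ^ (p - 1)) (f y) = y := by
    rw [mul_swap_pow_apply_of_forall_ne, ← mul_apply, ← pow_succ, Nat.sub_add_cancel hp, hpy]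
    intro j hj
    rw [← mul_apply, ← pow_succ]
    exact ⟨fun hx => h (hx ▸ sameCycle_pow_right.2 (SameCycle.refl f y)).symm,
      pow_apply_ne_self_of_lt_hitTime (SameCycle.refl f y) j.succ_pos (by omega)⟩
  rw [← sameCycle_apply_left, mul_apply, swap_apply_left]
  exact ⟨(p - 1 : ℕ), by rwa [zpow_natCast]⟩

theorem sameCycle_mul_swap_of_hitTime_lt [Finite α] (hxy : x ≠ y) (hxz : x ≠ z)
    (h : f.SameCycle x y) (hlt : hitTime f x y < hitTime f x z) : (f * swap y z).SameCycle x y := by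
  have hpath : ((f * swap y z) ^ hitTime f x y) x = y := by
    rw [mul_swap_pow_apply_of_forall_ne fun j hj => ⟨pow_apply_ne_of_lt_hitTime hxy hj,
      pow_apply_ne_of_lt_hitTime hxz (hj.trans hlt)⟩]
    exact (hitTime_pos_and_pow_apply h).2
  exact ⟨(hitTime f x y : ℕ), by rwa [zpow_natCast]⟩

end swap

theorem isCycle_and_support_eq_univ_iff {α : Type*} [Fintype α] [DecidableEq α] [Nontrivial α]
    {f : Perm α} : f.IsCycle ∧ f.support = Finset.univ ↔ ∀ x y, f.SameCycle x y := by
  constructor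
  · rintro ⟨hf, hsupp⟩ x y
    exact hf.sameCycle (mem_support.1 (hsupp ▸ Finset.mem_univ x))
      (mem_support.1 (hsupp ▸ Finset.mem_univ y))
  · intro h
    have hmoved (x : α) : f x ≠ x := fun hx => by
      obtain ⟨y, hy⟩ := exists_ne x
      exact hy ((h x y).eq_of_left hx).symm
    obtain ⟨x, -⟩ := exists_pair_ne α
    exact ⟨⟨x, hmoved x, fun y _ => h x y⟩,
      Finset.eq_univ_of_forall fun y => mem_support.2 (hmoved y)⟩

end Equiv.Perm

section cycleCount

open Perm

variable {α : Type*} [Fintype α] [DecidableEq α] {f : Perm α} {x y : α}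

theorem cycleCount_eq_card_quotient_sameCycle (f : Perm α) :
    cycleCount f = Nat.card (Quotient (SameCycle.setoid f)) := by
  let toSum (z : α) : {c // c ∈ f.cycleFactorsFinset} ⊕ {x // f x = x} :=
    if hz : f z = z then .inr ⟨z, hz⟩
    else .inl ⟨f.cycleOf z, cycleOf_mem_cycleFactorsFinset_iff.2 (mem_support.2 hz)⟩
  have hconst (z w : α) (h : f.SameCycle z w) : toSum z = toSum w := by
    by_cases hz : f z = z
    · rw [h.eq_of_left hz]
    · have hw : f w ≠ w := fun hw => hz (h.apply_eq_self_iff.2 hw)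
      simp only [toSum, hz, hw, dite_false, h.cycleOf_eq]
  have hinj : Function.Injective (Quotient.lift (s := SameCycle.setoid f) toSum hconst) := by
    intro a b
    refine Quotient.inductionOn₂ a b fun z w (hzw : toSum z = toSum w) => Quotient.sound ?_
    show f.SameCycle z w
    by_cases hz : f z = z <;> by_cases hw : f w = w <;>
      simp only [toSum, hz, hw, dite_true, dite_false, reduceCtorEq,
        Sum.inr.injEq, Sum.inl.injEq, Subtype.mk.injEq] at hzw
    · exact hzw ▸ SameCycle.refl f z
    · have hws : w ∈ (f.cycleOf z).support := by
        rw [hzw, mem_support_cycleOf_iff]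
        exact ⟨SameCycle.refl f w, mem_support.2 hw⟩
      exact (mem_support_cycleOf_iff.1 hws).1
  have hsurj : Function.Surjective (Quotient.lift (s := SameCycle.setoid f) toSum hconst) := by
    rintro (⟨c, hc⟩ | ⟨z, hz⟩)
    · obtain ⟨z, hcz, -⟩ := (mem_cycleFactorsFinset_iff.1 hc).1
      have hzc : z ∈ c.support := mem_support.2 hcz
      have hfz : f z ≠ z := mem_support.1 (mem_cycleFactorsFinset_support_le hc hzc)
      refine ⟨Quotient.mk _ z, ?_⟩
      simp only [Quotient.lift_mk, toSum, hfz, dite_false, cycle_is_cycleOf hzc hc]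
    · exact ⟨Quotient.mk _ z, by simp only [Quotient.lift_mk, toSum, hz, dite_true]⟩
  rw [Nat.card_congr (Equiv.ofBijective _ ⟨hinj, hsurj⟩), Nat.card_sum, Nat.card_eq_fintype_card,
    Nat.card_eq_fintype_card, Fintype.card_coe, cycleCount, cycleType_def, Multiset.card_map]
  rfl

theorem cycleCount_mul_swap_of_sameCycle (hxy : x ≠ y) (h : f.SameCycle x y) :
    cycleCount (f * swap x y) = cycleCount f + 1 := by
  rw [cycleCount_eq_card_quotient_sameCycle, cycleCount_eq_card_quotient_sameCycle]
  exact Setoid.card_quotient_eq_add_one_of_split (fun _ _ => h.of_mul_swap) h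
    (not_sameCycle_mul_swap hxy h) (fun _ => SameCycle.mul_swap_or)
    (fun _ _ => h.mul_swap_of_not_sameCycle)

theorem cycleCount_mul_swap_of_not_sameCycle (hxy : x ≠ y) (h : ¬ f.SameCycle x y) :
    cycleCount (f * swap x y) + 1 = cycleCount f := by
  simpa only [mul_swap_mul_self] using
    (cycleCount_mul_swap_of_sameCycle hxy (sameCycle_mul_swap_of_not_sameCycle h)).symm

theorem cycleCount_eq_one_iff [Nonempty α] : cycleCount f = 1 ↔ ∀ x y, f.SameCycle x y := by
  rw [cycleCount_eq_card_quotient_sameCycle, Nat.card_eq_one_iff_unique, Quotient.subsingleton_iff,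
    Setoid.eq_top_iff, nonempty_quotient_iff, and_iff_left ‹_›]
  rfl

end cycleCount

theorem slicing_decreases_genus_general {H : Type*} [Fintype H] [DecidableEq H]
    (n g : ℕ)
    (α σ' : Equiv.Perm H)
    (hface : (α * σ').IsCycle ∧ (α * σ').support = Finset.univ)
    (hgenus : cycleCount σ' + 2 * (g + 1) = n + 1)
    (a₁ a₂ a₃ : H)
    (hne12 : a₁ ≠ a₂) (hne13 : a₁ ≠ a₃) (hne23 : a₂ ≠ a₃)
    (hc2 : σ'.SameCycle a₁ a₂) (hc3 : σ'.SameCycle a₁ a₃)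
    (hvorder : hitTime σ' a₁ a₂ < hitTime σ' a₁ a₃)
    (hintertwined : hitTime (α * σ') a₁ a₃ < hitTime (α * σ') a₁ a₂)
    (σ : Equiv.Perm H)
    (hσ : σ = σ' * (Equiv.swap a₂ a₃ * Equiv.swap a₁ a₂)) :
    (α * σ).IsCycle ∧ (α * σ).support = Finset.univ ∧
      cycleCount σ + 2 * g = n + 1 := by
  have : Nontrivial H := nontrivial_of_ne a₁ a₂ hne12
  have hγ := Perm.isCycle_and_support_eq_univ_iff.1 hface
  have hvertices : cycleCount σ = cycleCount σ' + 2 := by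
    rw [hσ, ← mul_assoc, cycleCount_mul_swap_of_sameCycle hne12
      (Perm.sameCycle_mul_swap_of_hitTime_lt hne12 hne13 hc2 hvorder),
      cycleCount_mul_swap_of_sameCycle hne23 (hc2.symm.trans hc3)]
  have h13 : (α * σ' * swap a₂ a₃).SameCycle a₁ a₃ :=
    swap_comm a₃ a₂ ▸ Perm.sameCycle_mul_swap_of_hitTime_lt hne13 hne12 (hγ a₁ a₃) hintertwined
  have h12 : ¬ (α * σ' * swap a₂ a₃).SameCycle a₁ a₂ := fun h12 =>
    Perm.not_sameCycle_mul_swap hne23 (hγ a₂ a₃) (h12.symm.trans h13)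
  have hfaces : cycleCount (α * σ) = 1 := by
    have hglue := cycleCount_mul_swap_of_not_sameCycle hne12 h12
    rw [cycleCount_mul_swap_of_sameCycle hne23 (hγ a₂ a₃), cycleCount_eq_one_iff.2 hγ] at hglue
    rw [hσ, ← mul_assoc, ← mul_assoc]
    omega
  obtain ⟨hcycle, hsupport⟩ := Perm.isCycle_and_support_eq_univ_iff.2
    (cycleCount_eq_one_iff.1 hfaces)
  exact ⟨hcycle, hsupport, by omega⟩

/-- the slicing operation: let `(H, α, σ̄)` be a unicellular map
of genus `g + 1` and `a₁, a₂, a₃` three half-edges in a single cycle `v̄` of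
`σ̄`, appearing in that cyclic order around `v̄` (so that `v̄` can be written
`(a₁, h¹₂, …, a₂, h¹₃, …, a₃, h¹₁, …)`), and intertwined, i.e. they occur in
the opposite cyclic order `(a₁, …, a₃, …, a₂, …)` in the face `γ̄ = ασ̄`.
Replacing `v̄` by the product of the three cycles
`(a₁,h¹₁,…)(a₂,h¹₂,…)(a₃,h¹₃,…)` yields exactly the permutation
`σ = σ̄ * (swap a₂ a₃ * swap a₁ a₂)`; then `ασ` is again a single `2n`-cycle,
and the resulting unicellular map has genus `g`. -/
theorem slicing_decreases_genus {H : Type*} [Fintype H] [DecidableEq H]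
    (n g : ℕ) (hn : 1 ≤ n) (hcard : Fintype.card H = 2 * n)
    (α σ' : Equiv.Perm H)
    (hinv : α * α = 1) (hfp : ∀ h : H, α h ≠ h)
    (hface : (α * σ').IsCycle ∧ (α * σ').support = Finset.univ)
    (hgenus : cycleCount σ' + 2 * (g + 1) = n + 1)
    (a₁ a₂ a₃ : H)
    (hne12 : a₁ ≠ a₂) (hne13 : a₁ ≠ a₃) (hne23 : a₂ ≠ a₃)
    (hc2 : σ'.SameCycle a₁ a₂) (hc3 : σ'.SameCycle a₁ a₃)
    (hvorder : hitTime σ' a₁ a₂ < hitTime σ' a₁ a₃)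
    (hintertwined : hitTime (α * σ') a₁ a₃ < hitTime (α * σ') a₁ a₂)
    (σ : Equiv.Perm H)
    (hσ : σ = σ' * (Equiv.swap a₂ a₃ * Equiv.swap a₁ a₂)) :
    (α * σ).IsCycle ∧ (α * σ).support = Finset.univ ∧
      cycleCount σ + 2 * g = n + 1 :=
  slicing_decreases_genus_general n g α σ' hface hgenus a₁ a₂ a₃ hne12 hne13 hne23 hc2 hc3 hvorder
    hintertwined σ hσ
end

section
/- For g ≥ 1, the rational polynomial R_g(X) = Σ over chains 0 = g₀ < g₁ < ... < g_r = g of Π_{i=1}^{r} (1/(2g_i)) · C(X+1-2g_{i-1}, 2(g_i-g_{i-1})+1) (where C(X,k) = X(X-1)...(X-k+1)/k!) is divisible by (X+1)X(X-1)···(X+1-2g), i.e. by Π_{j=0}^{2g} (X+1-j). -/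
/-!
Splitting off the last step of a chain gives the recursion `R_g = Σ_{k<g} R_k · F(k, g)` with
`F(k, g) = chainFactor k g = C(X+1-2k, 2(g-k)+1) / (2g)`. Evaluate at `X = j - 1` with
`0 ≤ j ≤ 2g`. If `2k ≤ j` then `F(k, g)` vanishes there, being `C(j-2k, 2(g-k)+1)` with
`0 ≤ j - 2k < 2(g-k)+1`; if `2k > j` then `k ≥ 1` and `j ≤ 2k`, so `R_k` vanishes there by
induction. Hence `R_g` has the `2g+1` distinct roots `-1, 0, …, 2g-1`.
-/

open Polynomial

/-- Polynomial binomial coefficient `C(P, k) = P(P-1)⋯(P-k+1)/k!`. -/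
noncomputable def pchoose (P : ℚ[X]) (k : ℕ) : ℚ[X] :=
  Polynomial.C ((Nat.factorial k : ℚ))⁻¹ * ∏ i ∈ Finset.range k, (P - (i : ℚ[X]))

/-- The polynomial `Π_{i=1}^r C(X+1-2g_{i-1}, 2(gᵢ-g_{i-1})+1)/(2gᵢ)`
associated to the chain `0 = g₀ < g₁ < ⋯ < g_r = g` whose intermediate
entries form the set `S ⊆ (0, g)`. -/
noncomputable def chainProdP (g : ℕ) (S : Finset ℕ) : ℚ[X] :=
  let l : List ℕ := 0 :: Finset.sort (insert g S) (· ≤ ·)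
  ((l.zip l.tail).map (fun ab =>
      Polynomial.C ((2 * (ab.2 : ℚ))⁻¹) *
        pchoose (Polynomial.X + 1 - 2 * (ab.1 : ℚ[X])) (2 * (ab.2 - ab.1) + 1))).prod

/-- The rational polynomial
`R_g(X) = Σ_{0=g₀<g₁<⋯<g_r=g} Π_{i=1}^r (1/(2gᵢ))·C(X+1-2g_{i-1}, 2(gᵢ-g_{i-1})+1)`. -/
noncomputable def RchainP (g : ℕ) : ℚ[X] :=
  if g = 0 then 1 else ∑ S ∈ (Finset.Ioo 0 g).powerset, chainProdP g S

open Finset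

theorem Polynomial.prod_X_sub_C_dvd_of_isRoot {R ι : Type*} [CommRing R] [IsDomain R]
    {s : Finset ι} {c : ι → R} (hc : Set.InjOn c s) {p : R[X]}
    (hroot : ∀ i ∈ s, p.IsRoot (c i)) :
    ∏ i ∈ s, (X - C (c i)) ∣ p := by
  rcases eq_or_ne p 0 with rfl | hp
  · exact dvd_zero _
  have hle : s.val.map c ≤ p.roots := by
    rw [Multiset.le_iff_subset (Multiset.Nodup.map_on hc s.nodup)]
    intro x hx
    obtain ⟨i, hi, rfl⟩ := Multiset.mem_map.mp hx
    exact (mem_roots hp).mpr (hroot i hi)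
  have := (Multiset.prod_X_sub_C_dvd_iff_le_roots hp _).mpr hle
  rwa [Multiset.map_map] at this

theorem Finset.sort_insert_of_forall_lt {α : Type*} [LinearOrder α] {a : α} {s : Finset α}
    (h : ∀ b ∈ s, b < a) : sort (insert a s) (· ≤ ·) = sort s (· ≤ ·) ++ [a] := by
  have ha : a ∉ s := fun has => lt_irrefl a (h a has)
  refine List.Perm.eq_of_pairwise' (pairwise_sort _ _) ?_ ?_
  · rw [List.pairwise_append]
    refine ⟨pairwise_sort _ _, List.pairwise_singleton _ a, ?_⟩
    intro b hb c hc
    rw [List.mem_singleton.mp hc]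
    exact (h b ((mem_sort _).mp hb)).le
  · rw [← Multiset.coe_eq_coe, sort_eq, ← Multiset.coe_add, sort_eq, insert_val_of_notMem ha,
      ← Multiset.singleton_add, add_comm]
    rfl

theorem List.zip_tail_concat {α : Type*} (x a : α) (l : List α) :
    ((x :: l) ++ [a]).zip (l ++ [a]) =
      (x :: l).zip l ++ [((x :: l).getLast (cons_ne_nil x l), a)] := by
  induction l generalizing x with
  | nil => rfl
  | cons y t ih =>
    have ih := ih y
    simp only [List.cons_append] at ih ⊢
    rw [List.zip_cons_cons, ih, List.getLast_cons_cons]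
    rfl

theorem pchoose_eval_eq_zero {P : ℚ[X]} {x : ℚ} {n k : ℕ} (hP : P.eval x = n) (hnk : n < k) :
    (pchoose P k).eval x = 0 := by
  rw [pchoose, eval_mul, eval_prod, prod_eq_zero (mem_range.mpr hnk) (by simp [hP]), mul_zero]

noncomputable def chainFactor (a b : ℕ) : ℚ[X] :=
  C ((2 * (b : ℚ))⁻¹) * pchoose (X + 1 - 2 * (a : ℚ[X])) (2 * (b - a) + 1)

theorem chainFactor_eval_eq_zero {a b j : ℕ} (haj : 2 * a ≤ j) (hjb : j ≤ 2 * b) :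
    (chainFactor a b).eval ((j : ℚ) - 1) = 0 := by
  have hP : (X + 1 - 2 * (a : ℚ[X])).eval ((j : ℚ) - 1) = ((j - 2 * a : ℕ) : ℚ) := by
    push_cast [haj]
    simp
  rw [chainFactor, eval_mul, pchoose_eval_eq_zero hP (by omega), mul_zero]

theorem chainProdP_empty (g : ℕ) : chainProdP g ∅ = chainFactor 0 g := by
  simp [chainProdP, chainFactor]

theorem chainProdP_eq_prod_zip (g : ℕ) (S : Finset ℕ) :
    chainProdP g S = (((0 :: sort (insert g S) (· ≤ ·)).zip (sort (insert g S) (· ≤ ·))).map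
      fun ab => chainFactor ab.1 ab.2).prod :=
  rfl

theorem chainProdP_insert {g k : ℕ} {S : Finset ℕ} (hkg : k < g) (hS : ∀ b ∈ S, b < k) :
    chainProdP g (insert k S) = chainProdP k S * chainFactor k g := by
  have hS' : ∀ b ∈ insert k S, b < g := by
    simpa [hkg] using fun b hb => (hS b hb).trans hkg
  rw [chainProdP_eq_prod_zip, chainProdP_eq_prod_zip k, sort_insert_of_forall_lt hS',
    ← List.cons_append, List.zip_tail_concat, List.map_append, List.prod_append,
    List.map_singleton, List.prod_singleton]
  simp [sort_insert_of_forall_lt hS]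

theorem sum_powerset_Ioo_chainProdP {m g : ℕ} (hmg : m < g) :
    ∑ S ∈ (Ioo 0 (m + 1)).powerset, chainProdP g S =
      ∑ k ∈ range (m + 1), RchainP k * chainFactor k g := by
  induction m with
  | zero =>
    rw [show Ioo 0 (0 + 1) = ∅ by decide, powerset_empty, sum_singleton,
      sum_range_one, chainProdP_empty, RchainP, if_pos rfl, one_mul]
  | succ m ih =>
    have hIoo : Ioo 0 (m + 1 + 1) = insert (m + 1) (Ioo 0 (m + 1)) := by
      rw [Ioo_insert_right m.succ_pos, ← Order.succ_eq_add_one, Ioo_succ_right_eq_Ioc]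
    have hlast : ∑ S ∈ (Ioo 0 (m + 1)).powerset, chainProdP g (insert (m + 1) S) =
        RchainP (m + 1) * chainFactor (m + 1) g := by
      rw [RchainP, if_neg m.succ_ne_zero, sum_mul]
      refine sum_congr rfl fun S hS => chainProdP_insert hmg fun b hb => ?_
      exact (mem_Ioo.mp (mem_powerset.mp hS hb)).2
    rw [hIoo, sum_powerset_insert (by simp), ih (by omega), hlast, sum_range_succ _ (m + 1)]

theorem RchainP_eq_sum {g : ℕ} (hg : g ≠ 0) :
    RchainP g = ∑ k ∈ range g, RchainP k * chainFactor k g := by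
  obtain ⟨m, rfl⟩ := Nat.exists_eq_succ_of_ne_zero hg
  rw [RchainP, if_neg hg, sum_powerset_Ioo_chainProdP m.lt_succ_self]

theorem RchainP_eval_eq_zero {g j : ℕ} (hg : 1 ≤ g) (hj : j ≤ 2 * g) :
    (RchainP g).eval ((j : ℚ) - 1) = 0 := by
  induction g using Nat.strong_induction_on generalizing j with
  | _ g ih =>
    rw [RchainP_eq_sum (by omega), eval_finsetSum]
    refine sum_eq_zero fun k hk => ?_
    have hkg : k < g := mem_range.mp hk
    rw [eval_mul]
    by_cases hkj : 2 * k ≤ j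
    · rw [chainFactor_eval_eq_zero hkj (by omega), mul_zero]
    · rw [ih k hkg (by omega) (by omega), zero_mul]

/-- Zagier's divisibility: for `g ≥ 1`, the polynomial
`R_g(X)` is divisible by `(X+1)X(X-1)⋯(X+1-2g) = Π_{j=0}^{2g} (X+1-j)`. -/
theorem Rg_divisible (g : ℕ) (hg : 1 ≤ g) :
    (∏ j ∈ Finset.range (2 * g + 1), (Polynomial.X + 1 - (j : ℚ[X]))) ∣
      RchainP g := by
  have hfactor (j : ℕ) : (X + 1 - (j : ℚ[X])) = X - C ((j : ℚ) - 1) := by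
    simp only [map_sub, map_natCast, map_one]
    ring
  simp_rw [hfactor]
  refine prod_X_sub_C_dvd_of_isRoot (fun i _ j _ hij => ?_) fun j hj => ?_
  · exact_mod_cast sub_left_injective hij
  · exact RchainP_eval_eq_zero hg (Nat.lt_succ_iff.mp (mem_range.mp hj))
end
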